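/- The square roots of β and of 3 do not lie in Q(ζ₉)⁺, i.e., there is no x ∈ Q(ζ₉)⁺ with x² = β, and no x ∈ Q(ζ₉)⁺ with x² = 3; however, 3β is a perfect square in Q(ζ₉)⁺, namely 3β = (u₁⁻¹u₂⁻¹β²)², where β = 2 - ζ₉⁴ - ζ₉⁵, u₁ = ζ₉ - ζ₉² - ζ₉⁵, u₂ = 1 - ζ₉⁴ - ζ₉⁵. -/

import Mathlib

/-!
`Q(ζ₉)⁺ = ℚ(c)` with `c = 2cos(π/9) = -(ζ₉⁴ + ζ₉⁵)`, a root of the irreducible cubic `X³ - 3X - 1`,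
so it has degree `3` over `ℚ`. In an extension of odd degree a rational number that becomes a
square was already a square, since its square root has degree `1` or `2` dividing the odd degree;
hence `3` is not a square in `Q(ζ₉)⁺`. On the other hand `β³ = 3u₁²u₂²` (a polynomial identity
modulo the ninth cyclotomic polynomial `X⁶ + X³ + 1`) gives `3β = (u₁⁻¹u₂⁻¹β²)²`, and then `β`
cannot be a square either, or `3 = 3β / β` would be one.
-/

noncomputable section

/-- `ζ₉ = exp(2πi/9)`. -/
def z9 : ℂ := Complex.exp (2 * Real.pi * Complex.I / 9)

/-- The totally real cubic field `Q(ζ₉)⁺ = Q(2cos(π/9))`, as a subfield of `ℂ`. -/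
def Kplus : IntermediateField ℚ ℂ :=
  IntermediateField.adjoin ℚ {((2 * Real.cos (Real.pi / 9) : ℝ) : ℂ)}

def u1 : ℂ := z9 - z9 ^ 2 - z9 ^ 5

def u2 : ℂ := 1 - z9 ^ 4 - z9 ^ 5

open Complex Polynomial Module

theorem isSquare_of_isSquare_algebraMap_of_odd_finrank {K L : Type*} [Field K] [Field L]
    [Algebra K L] [FiniteDimensional K L] (hodd : Odd (finrank K L)) {a : K}
    (ha : IsSquare (algebraMap K L a)) : IsSquare a := by
  obtain ⟨x, hx⟩ := ha
  have hint : IsIntegral K x := .of_finite K x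
  have hroot : aeval x (X ^ 2 - C a) = 0 := by simp [hx, sq]
  have hle : (minpoly K x).natDegree ≤ 2 :=
    (natDegree_le_of_dvd (minpoly.dvd K x hroot) (X_pow_sub_C_ne_zero two_pos a)).trans
      natDegree_X_pow_sub_C.le
  have hodd' : Odd (minpoly K x).natDegree := hodd.of_dvd_nat (minpoly.degree_dvd hint)
  have hpos := minpoly.natDegree_pos hint
  obtain ⟨r, rfl⟩ : x ∈ (algebraMap K L).range :=
    minpoly.natDegree_eq_one_iff.mp (by rcases hodd' with ⟨k, hk⟩; omega)
  exact ⟨r, (algebraMap K L).injective (by rw [map_mul, hx])⟩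

theorem Rat.not_isSquare_three : ¬ IsSquare (3 : ℚ) := by
  rw [show (3 : ℚ) = ((3 : ℕ) : ℚ) by norm_num, Rat.isSquare_natCast_iff]
  rintro ⟨r, hr⟩
  have : r ≤ 2 := by nlinarith
  interval_cases r <;> omega

theorem Rat.not_isRoot_X_pow_three_sub_three_mul_X_sub_one (r : ℚ) :
    r ^ 3 - 3 * r - 1 ≠ 0 := by
  intro hr
  have hmonic : ((X : ℤ[X]) ^ 3 - 3 * X - 1).Monic := by monicity!
  obtain ⟨m, rfl⟩ : IsLocalization.IsInteger ℤ r :=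
    isInteger_of_is_root_of_monic hmonic <| by
      simp only [map_sub, map_pow, map_mul, aeval_X, map_ofNat, map_one]
      exact hr
  rw [eq_intCast] at hr
  have hm : m ^ 3 - 3 * m - 1 = 0 := by exact_mod_cast hr
  have hunit : IsUnit m := isUnit_of_dvd_one ⟨m ^ 2 - 3, by linear_combination -hm⟩
  rcases Int.isUnit_iff.mp hunit with rfl | rfl <;> norm_num at hm

theorem natDegree_X_pow_three_sub_three_mul_X_sub_one :
    ((X : ℚ[X]) ^ 3 - 3 * X - 1).natDegree = 3 := by
  compute_degree!

theorem irreducible_X_pow_three_sub_three_mul_X_sub_one :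
    Irreducible ((X : ℚ[X]) ^ 3 - 3 * X - 1) := by
  rw [irreducible_iff_roots_eq_zero_of_degree_le_three
    (by rw [natDegree_X_pow_three_sub_three_mul_X_sub_one]; norm_num)
    natDegree_X_pow_three_sub_three_mul_X_sub_one.le, Multiset.eq_zero_iff_forall_notMem]
  intro r hr
  exact Rat.not_isRoot_X_pow_three_sub_three_mul_X_sub_one r (by simpa using (mem_roots'.mp hr).2)

local notation "c₉" => ((2 * Real.cos (Real.pi / 9) : ℝ) : ℂ)

local notation "β" => (2 - z9 ^ 4 - z9 ^ 5 : ℂ)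

theorem isPrimitiveRoot_z9 : IsPrimitiveRoot z9 9 := by
  simpa [z9] using Complex.isPrimitiveRoot_exp 9 (by norm_num)

theorem z9_pow_six_add_z9_pow_three_add_one : z9 ^ 6 + z9 ^ 3 + 1 = 0 := by
  have h : (z9 ^ 3 - 1) * (z9 ^ 6 + z9 ^ 3 + 1) = 0 := by
    linear_combination isPrimitiveRoot_z9.pow_eq_one
  refine (mul_eq_zero.mp h).resolve_left (sub_ne_zero.mpr ?_)
  exact isPrimitiveRoot_z9.pow_ne_one_of_pos_of_lt (by norm_num) (by norm_num)

theorem z9_pow_eq_exp (n : ℕ) : z9 ^ n = exp (n * (2 * Real.pi / 9) * I) := by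
  rw [z9, ← exp_nat_mul]
  ring_nf

theorem two_cos_pi_div_nine_eq : c₉ = -(z9 ^ 4 + z9 ^ 5) := by
  have h4 : z9 ^ 4 = -exp (-(Real.pi / 9 : ℂ) * I) := by
    rw [z9_pow_eq_exp, show ((4 : ℕ) : ℂ) * (2 * Real.pi / 9) * I
      = Real.pi * I + -(Real.pi / 9 : ℂ) * I by push_cast; ring, exp_add, exp_pi_mul_I]
    ring
  have h5 : z9 ^ 5 = -exp ((Real.pi / 9 : ℂ) * I) := by
    rw [z9_pow_eq_exp, show ((5 : ℕ) : ℂ) * (2 * Real.pi / 9) * I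
      = Real.pi * I + (Real.pi / 9 : ℂ) * I by push_cast; ring, exp_add, exp_pi_mul_I]
    ring
  rw [h4, h5]
  push_cast
  rw [two_cos]
  ring

theorem two_cos_pi_div_nine_isRoot :
    aeval c₉ ((X : ℚ[X]) ^ 3 - 3 * X - 1) = 0 := by
  simp only [map_sub, map_pow, map_mul, aeval_X, map_ofNat, map_one, two_cos_pi_div_nine_eq]
  linear_combination (-z9 ^ 3 - 3 * z9 ^ 4 - 3 * z9 ^ 5 - z9 ^ 6) * isPrimitiveRoot_z9.pow_eq_one
    - z9_pow_six_add_z9_pow_three_add_one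

theorem isIntegral_two_cos_pi_div_nine : IsIntegral ℚ c₉ :=
  ⟨_, by monicity!, two_cos_pi_div_nine_isRoot⟩

instance : FiniteDimensional ℚ Kplus :=
  IntermediateField.adjoin.finiteDimensional isIntegral_two_cos_pi_div_nine

theorem finrank_Kplus : finrank ℚ Kplus = 3 := by
  rw [Kplus, IntermediateField.adjoin.finrank isIntegral_two_cos_pi_div_nine,
    ← minpoly.eq_of_irreducible_of_monic irreducible_X_pow_three_sub_three_mul_X_sub_one
      two_cos_pi_div_nine_isRoot (by monicity!),
    natDegree_X_pow_three_sub_three_mul_X_sub_one]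

theorem Kplus.not_isSquare_three : ¬ IsSquare (3 : Kplus) := fun h =>
  Rat.not_isSquare_three <| isSquare_of_isSquare_algebraMap_of_odd_finrank
    (by rw [finrank_Kplus]; decide) (by rwa [map_ofNat])

theorem beta_ne_zero : β ≠ 0 := by
  have hcos : 0 < Real.cos (Real.pi / 9) :=
    Real.cos_pos_of_mem_Ioo ⟨by linarith [Real.pi_pos], by linarith [Real.pi_pos]⟩
  rw [show β = ((2 + 2 * Real.cos (Real.pi / 9) : ℝ) : ℂ) by
    rw [ofReal_add, two_cos_pi_div_nine_eq]; push_cast; ring, ofReal_ne_zero]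
  positivity

theorem beta_pow_three : β ^ 3 = 3 * u1 ^ 2 * u2 ^ 2 := by
  rw [u1, u2]
  linear_combination (8 - 3 * z9 ^ 2 - 2 * z9 ^ 3 - 15 * z9 ^ 4 - 9 * z9 ^ 5 + 6 * z9 ^ 6
    + 3 * z9 ^ 7 + 12 * z9 ^ 8 + 14 * z9 ^ 9 - 3 * z9 ^ 11 - 3 * z9 ^ 12 - 6 * z9 ^ 13
    - 3 * z9 ^ 14) * z9_pow_six_add_z9_pow_three_add_one

theorem three_mul_beta_eq_sq :
    3 * β = (u1⁻¹ * u2⁻¹ * β ^ 2) ^ 2 := by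
  have hu : u1 * u2 ≠ 0 := fun h => beta_ne_zero <| pow_eq_zero_iff three_ne_zero |>.mp <| by
    rw [beta_pow_three]
    linear_combination 3 * u1 * u2 * h
  obtain ⟨hu1, hu2⟩ := mul_ne_zero_iff.mp hu
  field_simp
  linear_combination -β * beta_pow_three

/-- Neither `β` nor `3` is a perfect square in `Q(ζ₉)⁺`, but `3β` is:
`3β = (u₁⁻¹u₂⁻¹β²)²`. -/
theorem stmt13 (U1 U2 B : Kplus)
    (hU1 : (U1 : ℂ) = u1) (hU2 : (U2 : ℂ) = u2)
    (hB : (B : ℂ) = 2 - z9 ^ 4 - z9 ^ 5) :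
    (∀ x : Kplus, x ^ 2 ≠ B) ∧ (∀ x : Kplus, x ^ 2 ≠ 3) ∧
      3 * B = (U1⁻¹ * U2⁻¹ * B ^ 2) ^ 2 := by
  have hsq : 3 * B = (U1⁻¹ * U2⁻¹ * B ^ 2) ^ 2 := Subtype.coe_injective <| by
    push_cast [IntermediateField.coe_inv]
    rw [hU1, hU2, hB]
    exact three_mul_beta_eq_sq
  have hB0 : B ≠ 0 := fun h => beta_ne_zero (by rw [← hB, h, ZeroMemClass.coe_zero])
  refine ⟨fun x hx => Kplus.not_isSquare_three ?_,
    fun x hx => Kplus.not_isSquare_three ⟨x, by rw [← hx, sq]⟩, hsq⟩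
  have h3B : IsSquare (3 * B) := ⟨_, by rw [hsq, sq]⟩
  simpa [hB0] using h3B.div (⟨x, by rw [← hx, sq]⟩ : IsSquare B)
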